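/- Let H be an r-graph with at least one edge such that the intersection of all edges of H is empty. There exists a constant c > 0 such that for any p = p(n) ∈ (0,1] with p(n)·n^{r−1} → ∞ as n → ∞, asymptotically almost surely ex(G^r_{n,p}, H) ≥ c·p·n^{r−1}. -/

import Mathlib

/-!
The edges of a hypergraph through a fixed vertex `z` form a star, and a star contains no copy of
`H`: the preimages of `z` in a copy would be one vertex of `H` lying in every edge. So
`ex(G, H)` is at least the degree of `z`. In `G^r_{n,p}` that degree is binomial with
`N = C(n - 1, r - 1) ≥ n^{r-1} / (2^{r-1} (r-1)!)` trials, and by Chebyshev's inequality it is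
at least `N p / 2` with probability at least `1 - 4 / (N p) → 1`.
-/

open Finset Filter

namespace Paper

/-- An `r`-graph: every edge has size `r`. -/
def IsUniform {V : Type*} (H : Finset (Finset V)) (r : ℕ) : Prop :=
  ∀ e ∈ H, e.card = r

/-- The set of vertices covered by the edges of `H`. -/
def verts {V : Type*} [DecidableEq V] (H : Finset (Finset V)) : Finset V :=
  H.sup id

/-- `c` is a copy of `F`: the image of `F` under a map injective on the vertices of `F`. -/
def IsCopyOf {V W : Type*} [DecidableEq V] [DecidableEq W]
    (c : Finset (Finset W)) (F : Finset (Finset V)) : Prop :=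
  ∃ f : V → W, Set.InjOn f ↑(verts F) ∧ c = F.image (fun e => e.image f)

/-- `H` contains a copy of `F`. -/
def ContainsCopy {V W : Type*} [DecidableEq V] [DecidableEq W]
    (H : Finset (Finset W)) (F : Finset (Finset V)) : Prop :=
  ∃ c, c ⊆ H ∧ IsCopyOf c F

open Classical in
/-- The Turán number: maximum number of edges of a subgraph of `G` with no copy of `F`. -/
noncomputable def exNum {V W : Type*} [DecidableEq V] [DecidableEq W]
    (G : Finset (Finset V)) (F : Finset (Finset W)) : ℕ :=
  (G.powerset.filter (fun G' => ¬ ContainsCopy G' F)).sup Finset.card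

/-- All possible edges of the complete `r`-graph on `Fin n`. -/
def allEdges (n r : ℕ) : Finset (Finset (Fin n)) :=
  Finset.powersetCard r Finset.univ

open Classical in
/-- Probability, under the Erdős–Rényi random `r`-graph `G^r_{n,p}`, of the event `A`. -/
noncomputable def prob (n r : ℕ) (p : ℝ) (A : Set (Finset (Finset (Fin n)))) : ℝ :=
  ∑ G ∈ (allEdges n r).powerset,
    if G ∈ A then p ^ G.card * (1 - p) ^ ((allEdges n r).card - G.card) else 0

/-- `m(H)`, the `r`-density of `H`. -/
noncomputable def mDensity {V : Type*} [DecidableEq V] (r : ℕ) (H : Finset (Finset V)) : ℝ :=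
  sSup {x : ℝ | ∃ G : Finset (Finset V), G ⊆ H ∧ 2 ≤ G.card ∧
    x = ((G.card : ℝ) - 1) / (((verts G).card : ℝ) - (r : ℝ))}

/-- `s(H) = 1/m(H)`. -/
noncomputable def sDensity {V : Type*} [DecidableEq V] (r : ℕ) (H : Finset (Finset V)) : ℝ :=
  1 / mDensity r H

/-- A tight `k`-tree. -/
def IsTightTree {V : Type*} [DecidableEq V] (k : ℕ) (T : Finset (Finset V)) : Prop :=
  IsUniform T k ∧ ∃ (t : ℕ) (e : Fin t → Finset V), Function.Injective e ∧
    T = Finset.image e Finset.univ ∧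
    ∀ i : Fin t, 0 < (i : ℕ) →
      ∃ v ∈ e i, ∃ s : Fin t, (s : ℕ) < (i : ℕ) ∧
        (∀ j : Fin t, (j : ℕ) < (i : ℕ) → v ∉ e j) ∧ e i \ {v} ⊆ e s

/-- The `r`-expansion of a hypergraph `S`: each edge `e` is enlarged with `r - |e|`
new vertices of degree one, distinct new vertices for distinct edges. -/
def expansion {V : Type*} [DecidableEq V] (r : ℕ) (S : Finset (Finset V)) :
    Finset (Finset (V ⊕ Finset V × ℕ)) :=
  S.image (fun e =>
    e.image Sum.inl ∪ (Finset.range (r - e.card)).image (fun i => Sum.inr (e, i)))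

/-- The codegree `d_H(σ)`: number of edges of `H` containing `σ`. -/
def degOf {V : Type*} [DecidableEq V] (H : Finset (Finset V)) (σ : Finset V) : ℕ :=
  (H.filter (fun e => σ ⊆ e)).card

/-- `Δ_j(S)`: the maximum over sets `J` of `j` edges of `H` of the number of members
of the collection `S` containing all edges of `J`. -/
def maxDeg {V : Type*} [DecidableEq V] (H : Finset (Finset V))
    (S : Finset (Finset (Finset V))) (j : ℕ) : ℕ :=
  (Finset.powersetCard j H).sup (fun J => (S.filter (fun c => J ⊆ c)).card)

/-- The complete `k`-graph on `m` vertices. -/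
def completeHypergraph (m k : ℕ) : Finset (Finset (Fin m)) :=
  Finset.powersetCard k Finset.univ

/-- The `r`-uniform linear cycle of length `m`. -/
def linearCycle (r m : ℕ) : Finset (Finset (ZMod (m * (r - 1)))) :=
  (Finset.range m).image (fun i =>
    (Finset.range r).image (fun j => ((i * (r - 1) + j : ℕ) : ZMod (m * (r - 1)))))

open Classical in
/-- The `r`-graph whose edges are the vertex sets of the `r`-cliques of `G`. -/
noncomputable def cliqueEdges {V : Type*} [Fintype V] (G : SimpleGraph V) (r : ℕ) :
    Finset (Finset V) :=
  Finset.univ.filter (fun s => G.IsNClique r s)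

section SubsetWeight

variable {α : Type*} [DecidableEq α]

/-- The probability of the outcome `A ⊆ s` when every element of `s` is kept independently with
probability `p`; `prob n r p` sums `subsetWeight p (allEdges n r)` over the event. -/
def subsetWeight (p : ℝ) (s A : Finset α) : ℝ :=
  p ^ A.card * (1 - p) ^ (s.card - A.card)

omit [DecidableEq α] in
lemma subsetWeight_nonneg {p : ℝ} (hp0 : 0 ≤ p) (hp1 : p ≤ 1) (s A : Finset α) :
    0 ≤ subsetWeight p s A := by
  have : 0 ≤ 1 - p := by linarith
  unfold subsetWeight
  positivity

lemma sum_subsetWeight_filter_superset (p : ℝ) {s u : Finset α} (hu : u ⊆ s) :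
    ∑ A ∈ s.powerset with u ⊆ A, subsetWeight p s A = p ^ u.card := by
  -- expand `∏ i ∈ s, (p + [i ∉ u] (1 - p))`, whose factors are `p` on `u` and `1` elsewhere
  have key := Finset.prod_add (fun _ => p) (fun i => if i ∉ u then 1 - p else 0) s
  have hterm : ∀ A ∈ s.powerset, (∏ _ ∈ A, p) * ∏ i ∈ s \ A, (if i ∉ u then 1 - p else 0) =
      if u ⊆ A then subsetWeight p s A else 0 := by
    intro A hA
    rw [Finset.mem_powerset] at hA
    have hiff : (∀ i ∈ s \ A, i ∉ u) ↔ u ⊆ A := by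
      simp only [Finset.mem_sdiff, and_imp, not_imp_not]
      exact ⟨fun h x hx => h x (hu hx) hx, fun h x _ hx => h hx⟩
    simp only [Finset.prod_ite_zero, hiff, Finset.prod_const, Finset.card_sdiff_of_subset hA,
      mul_ite, mul_zero, subsetWeight]
  rw [Finset.sum_filter, ← Finset.sum_congr rfl hterm, ← key,
    ← Finset.prod_inter_mul_prod_sdiff s u, Finset.inter_eq_right.2 hu]
  have hu' : ∀ i ∈ u, (p + if i ∉ u then 1 - p else 0) = p := by simp +contextual
  have hsu : ∀ i ∈ s \ u, (p + if i ∉ u then 1 - p else 0) = 1 := by simp +contextual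
  rw [Finset.prod_congr rfl hu', Finset.prod_congr rfl hsu, Finset.prod_const,
    Finset.prod_const_one, mul_one]

lemma sum_subsetWeight (p : ℝ) (s : Finset α) : ∑ A ∈ s.powerset, subsetWeight p s A = 1 := by
  simpa using sum_subsetWeight_filter_superset p (Finset.empty_subset s)

lemma sum_subsetWeight_mul_ite_subset (p : ℝ) {s u : Finset α} (hu : u ⊆ s) :
    ∑ A ∈ s.powerset, subsetWeight p s A * (if u ⊆ A then 1 else 0) = p ^ u.card := by
  simp_rw [mul_boole, ← Finset.sum_filter]
  exact sum_subsetWeight_filter_superset p hu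

lemma cast_card_filter_eq_sum_ite (A T : Finset α) :
    ((T.filter (· ∈ A)).card : ℝ) = ∑ x ∈ T, if x ∈ A then 1 else 0 := by
  rw [Finset.card_filter]
  push_cast
  rfl

lemma sum_subsetWeight_mul_card_inter (p : ℝ) {s T : Finset α} (hT : T ⊆ s) :
    ∑ A ∈ s.powerset, subsetWeight p s A * ((A ∩ T).card : ℝ) = T.card * p := by
  have hx : ∀ x ∈ T,
      ∑ A ∈ s.powerset, subsetWeight p s A * (if {x} ⊆ A then 1 else 0) = p := fun x hx => by
    rw [sum_subsetWeight_mul_ite_subset p (Finset.singleton_subset_iff.2 (hT hx)),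
      Finset.card_singleton, pow_one]
  simp_rw [Finset.inter_comm _ T, ← Finset.filter_mem_eq_inter, cast_card_filter_eq_sum_ite,
    Finset.mul_sum, ← Finset.singleton_subset_iff]
  rw [Finset.sum_comm, Finset.sum_congr rfl hx, Finset.sum_const, nsmul_eq_mul]

lemma sum_subsetWeight_mul_card_inter_sq (p : ℝ) {s T : Finset α} (hT : T ⊆ s) :
    ∑ A ∈ s.powerset, subsetWeight p s A * ((A ∩ T).card : ℝ) ^ 2 =
      T.card * p + T.card * (T.card - 1) * p ^ 2 := by
  have hxy : ∀ x ∈ T, ∀ y ∈ T,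
      ∑ A ∈ s.powerset, subsetWeight p s A * (if x ∈ A ∧ y ∈ A then 1 else 0) =
        p ^ 2 + if x = y then p - p ^ 2 else 0 := fun x hx y hy => by
    simp_rw [← Finset.singleton_subset_iff (a := y), ← Finset.insert_subset_iff]
    rw [sum_subsetWeight_mul_ite_subset p (Finset.insert_subset (hT hx)
      (Finset.singleton_subset_iff.2 (hT hy)))]
    by_cases h : x = y
    · simp [h]
    · simp [Finset.card_pair h, h]
  simp_rw [Finset.inter_comm _ T, ← Finset.filter_mem_eq_inter, cast_card_filter_eq_sum_ite, sq,
    Finset.sum_mul_sum, ite_zero_mul_ite_zero, one_mul, Finset.mul_sum]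
  have hx : ∀ x ∈ T, ∑ A ∈ s.powerset, ∑ y ∈ T,
      subsetWeight p s A * (if x ∈ A ∧ y ∈ A then 1 else 0) = T.card * p ^ 2 + (p - p ^ 2) :=
    fun x hx => by
      rw [Finset.sum_comm, Finset.sum_congr rfl (hxy x hx), Finset.sum_add_distrib,
        Finset.sum_const, Finset.sum_ite_eq, if_pos hx, nsmul_eq_mul]
  rw [Finset.sum_comm, Finset.sum_congr rfl hx, Finset.sum_const, nsmul_eq_mul]
  ring

lemma sum_subsetWeight_mul_sq_card_inter_sub (p : ℝ) {s T : Finset α} (hT : T ⊆ s) :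
    ∑ A ∈ s.powerset, subsetWeight p s A * (((A ∩ T).card : ℝ) - T.card * p) ^ 2 =
      T.card * p * (1 - p) := by
  have hexpand : ∀ A : Finset α,
      subsetWeight p s A * (((A ∩ T).card : ℝ) - T.card * p) ^ 2 =
        subsetWeight p s A * ((A ∩ T).card : ℝ) ^ 2
          - 2 * T.card * p * (subsetWeight p s A * ((A ∩ T).card : ℝ))
          + (T.card * p) ^ 2 * subsetWeight p s A := fun A => by ring
  simp_rw [hexpand, Finset.sum_add_distrib, Finset.sum_sub_distrib, ← Finset.mul_sum]
  rw [sum_subsetWeight_mul_card_inter_sq p hT, sum_subsetWeight_mul_card_inter p hT,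
    sum_subsetWeight]
  ring

/-- Chebyshev's inequality for the lower tail of `#(A ∩ T)`, a binomial variable with mean
`#T * p`. -/
lemma sum_subsetWeight_filter_card_inter_lt_le {p : ℝ} (hp0 : 0 < p) (hp1 : p ≤ 1)
    {s T : Finset α} (hT : T ⊆ s) (hTne : T.Nonempty) {t : ℝ} (ht : t ≤ T.card * p / 2) :
    ∑ A ∈ s.powerset with ((A ∩ T).card : ℝ) < t, subsetWeight p s A ≤ 4 / (T.card * p) := by
  set μ : ℝ := T.card * p
  have hμ : 0 < μ := mul_pos (Nat.cast_pos.2 hTne.card_pos) hp0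
  have hw := subsetWeight_nonneg hp0.le hp1 s
  have key :
      (∑ A ∈ s.powerset with ((A ∩ T).card : ℝ) < t, subsetWeight p s A) * (μ / 2) ^ 2 ≤ μ :=
    calc _ = ∑ A ∈ s.powerset with ((A ∩ T).card : ℝ) < t, subsetWeight p s A * (μ / 2) ^ 2 :=
          Finset.sum_mul _ _ _
      _ ≤ ∑ A ∈ s.powerset with ((A ∩ T).card : ℝ) < t,
            subsetWeight p s A * (((A ∩ T).card : ℝ) - μ) ^ 2 := by
          refine Finset.sum_le_sum fun A hA => mul_le_mul_of_nonneg_left ?_ (hw A)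
          have hlt := (Finset.mem_filter.1 hA).2
          nlinarith
      _ ≤ ∑ A ∈ s.powerset, subsetWeight p s A * (((A ∩ T).card : ℝ) - μ) ^ 2 :=
          Finset.sum_le_sum_of_subset_of_nonneg (Finset.filter_subset _ _)
            fun A _ _ => mul_nonneg (hw A) (sq_nonneg _)
      _ = μ * (1 - p) := sum_subsetWeight_mul_sq_card_inter_sub p hT
      _ ≤ μ := mul_le_of_le_one_right hμ.le (by linarith)
  calc _ ≤ μ / (μ / 2) ^ 2 := (le_div_iff₀ (by positivity)).2 key
    _ = 4 / μ := by field_simp; ring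

lemma one_sub_le_sum_subsetWeight_filter {p : ℝ} (hp0 : 0 < p) (hp1 : p ≤ 1)
    {s T : Finset α} (hT : T ⊆ s) (hTne : T.Nonempty) {t : ℝ} (ht : t ≤ T.card * p / 2)
    (P : Finset α → Prop) [DecidablePred P]
    (hP : ∀ A ∈ s.powerset, t ≤ ((A ∩ T).card : ℝ) → P A) :
    1 - 4 / (T.card * p) ≤ ∑ A ∈ s.powerset with P A, subsetWeight p s A := by
  have hsplit := Finset.sum_filter_add_sum_filter_not s.powerset P (subsetWeight p s)
  have hnot : ∑ A ∈ s.powerset with ¬ P A, subsetWeight p s A ≤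
      ∑ A ∈ s.powerset with ((A ∩ T).card : ℝ) < t, subsetWeight p s A := by
    refine Finset.sum_le_sum_of_subset_of_nonneg ?_
      fun A _ _ => subsetWeight_nonneg hp0.le hp1 s A
    intro A hA
    rw [Finset.mem_filter] at hA ⊢
    exact ⟨hA.1, lt_of_not_ge fun h => hA.2 (hP A hA.1 h)⟩
  rw [sum_subsetWeight] at hsplit
  linarith [sum_subsetWeight_filter_card_inter_lt_le hp0 hp1 hT hTne ht]

end SubsetWeight

section Hypergraph

variable {V W : Type*} [DecidableEq V] [DecidableEq W]

lemma IsCopyOf.exists_forall_mem {c : Finset (Finset W)} {F : Finset (Finset V)}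
    (hc : IsCopyOf c F) (hF : F.Nonempty) {w : W} (hw : ∀ e ∈ c, w ∈ e) :
    ∃ v, ∀ e ∈ F, v ∈ e := by
  obtain ⟨f, hf, rfl⟩ := hc
  have hpre : ∀ e ∈ F, ∃ v ∈ e, f v = w := fun e he => by
    simpa using hw _ (Finset.mem_image_of_mem _ he)
  have hverts : ∀ e ∈ F, ∀ v ∈ e, v ∈ verts F := fun e he v hv => Finset.mem_sup.2 ⟨e, he, hv⟩
  obtain ⟨e₀, he₀⟩ := hF
  obtain ⟨v₀, hv₀, hfv₀⟩ := hpre e₀ he₀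
  refine ⟨v₀, fun e he => ?_⟩
  obtain ⟨v, hv, hfv⟩ := hpre e he
  rwa [← hf (hverts e he v hv) (hverts e₀ he₀ v₀ hv₀) (hfv.trans hfv₀.symm)]

lemma not_containsCopy_filter_mem {F : Finset (Finset V)} (hF : F.Nonempty)
    (hcommon : ∀ v, ∃ e ∈ F, v ∉ e) (G : Finset (Finset W)) (w : W) :
    ¬ ContainsCopy (G.filter (w ∈ ·)) F := by
  rintro ⟨c, hcG, hc⟩
  obtain ⟨v, hv⟩ := hc.exists_forall_mem hF fun e he => (Finset.mem_filter.1 (hcG he)).2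
  obtain ⟨e, he, hve⟩ := hcommon v
  exact hve (hv e he)

lemma card_le_exNum {G G' : Finset (Finset W)} {F : Finset (Finset V)} (hG' : G' ⊆ G)
    (hfree : ¬ ContainsCopy G' F) : G'.card ≤ exNum G F := by
  classical
  exact Finset.le_sup (f := Finset.card) (Finset.mem_filter.2 ⟨Finset.mem_powerset.2 hG', hfree⟩)

end Hypergraph

lemma prob_le_one {n r : ℕ} {p : ℝ} (hp0 : 0 ≤ p) (hp1 : p ≤ 1)
    (A : Set (Finset (Finset (Fin n)))) : prob n r p A ≤ 1 := by
  refine (Finset.sum_le_sum fun G _ => ?_).trans (sum_subsetWeight p (allEdges n r)).le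
  split_ifs
  · exact le_rfl
  · exact subsetWeight_nonneg hp0 hp1 _ G

lemma one_sub_le_prob_le_exNum {V : Type*} [DecidableEq V] {H : Finset (Finset V)}
    (hne : H.Nonempty) (hint : ∀ v : V, ∃ e ∈ H, v ∉ e) {n r : ℕ} (hr : 0 < r) (hrn : r ≤ n)
    {p : ℝ} (hp0 : 0 < p) (hp1 : p ≤ 1) {t : ℝ} (ht : t ≤ (n - 1).choose (r - 1) * p / 2) :
    1 - 4 / ((n - 1).choose (r - 1) * p) ≤ prob n r p {G | t ≤ exNum G H} := by
  classical
  set z : Fin n := ⟨0, by omega⟩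
  set T := (allEdges n r).filter (z ∈ ·)
  have hTcard : T.card = (n - 1).choose (r - 1) := by
    simpa [T, allEdges] using
      Finset.card_filter_powersetCard_subset {z} Finset.univ r (by simp) (by simpa)
  have hTne : T.Nonempty := Finset.card_pos.1 (hTcard ▸ Nat.choose_pos (by omega))
  rw [← hTcard] at ht ⊢
  rw [prob, ← Finset.sum_filter]
  refine one_sub_le_sum_subsetWeight_filter hp0 hp1 (Finset.filter_subset _ _) hTne ht _
    fun G hG htG => ?_
  have hstar : G ∩ T = G.filter (z ∈ ·) := by
    ext e
    simp only [T, Finset.mem_inter, Finset.mem_filter]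
    exact ⟨fun h => ⟨h.1, h.2.2⟩, fun h => ⟨h.1, Finset.mem_powerset.1 hG h.1, h.2⟩⟩
  rw [hstar] at htG
  exact htG.trans (Nat.cast_le.2 (card_le_exNum (Finset.filter_subset _ _)
    (not_containsCopy_filter_mem hne hint G z)))

lemma pow_le_two_pow_mul_factorial_mul_choose {n k : ℕ} (h : 2 * k < n) :
    (n : ℝ) ^ k ≤ 2 ^ k * k.factorial * (n - 1).choose k := by
  have hchoose := Nat.pow_le_choose (α := ℝ) k (n - 1)
  rw [show n - 1 + 1 - k = n - k by omega, div_le_iff₀' (by positivity)] at hchoose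
  have hn : (n : ℝ) ≤ 2 * ((n - k : ℕ) : ℝ) := by
    rw [Nat.cast_sub (by omega)]
    have : (2 * k : ℝ) < n := by exact_mod_cast h
    linarith
  calc (n : ℝ) ^ k ≤ (2 * ((n - k : ℕ) : ℝ)) ^ k := by gcongr
    _ = 2 ^ k * ((n - k : ℕ) : ℝ) ^ k := mul_pow _ _ _
    _ ≤ 2 ^ k * (k.factorial * (n - 1).choose k) := by gcongr
    _ = _ := by ring

theorem statement_11_general {V : Type} [DecidableEq V] (r : ℕ) (H : Finset (Finset V))
    (hne : H.Nonempty) (hint : ∀ v : V, ∃ e ∈ H, v ∉ e) :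
    ∃ c : ℝ, 0 < c ∧ ∀ p : ℕ → ℝ, (∀ n, 0 < p n ∧ p n ≤ 1) →
      Tendsto (fun n : ℕ => p n * (n : ℝ) ^ (r - 1)) atTop atTop →
      Tendsto (fun n : ℕ => prob n r (p n)
        {G | c * p n * (n : ℝ) ^ (r - 1) ≤ (exNum G H : ℝ)})
        atTop (nhds 1) := by
  set K : ℝ := 2 ^ (r - 1) * (r - 1).factorial
  have hK : 0 < K := by positivity
  refine ⟨1 / (2 * K), by positivity, fun p hp hpn => ?_⟩
  obtain rfl | hr := Nat.eq_zero_or_pos r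
  · obtain ⟨n, hn⟩ := (hpn.eventually_gt_atTop 1).exists
    simp only [zero_tsub, pow_zero, mul_one] at hn
    exact absurd (hp n).2 hn.not_ge
  set N : ℕ → ℝ := fun n => ((n - 1).choose (r - 1) : ℝ)
  have hpowN : ∀ᶠ n : ℕ in atTop, (n : ℝ) ^ (r - 1) ≤ K * N n :=
    (eventually_gt_atTop (2 * (r - 1))).mono fun n hn =>
      pow_le_two_pow_mul_factorial_mul_choose hn
  have hNp : Tendsto (fun n => N n * p n) atTop atTop := by
    refine tendsto_atTop_mono' _ ?_ (hpn.atTop_div_const hK)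
    filter_upwards [hpowN] with n hn
    rw [div_le_iff₀ hK]
    nlinarith [(hp n).1]
  have hlower : Tendsto (fun n => 1 - 4 / (N n * p n)) atTop (nhds 1) := by
    simpa using tendsto_const_nhds.sub (hNp.const_div_atTop 4)
  refine tendsto_of_tendsto_of_tendsto_of_le_of_le' hlower tendsto_const_nhds ?_
    (Eventually.of_forall fun n => prob_le_one (hp n).1.le (hp n).2 _)
  filter_upwards [hpowN, eventually_ge_atTop r] with n hn hrn
  refine one_sub_le_prob_le_exNum hne hint hr hrn (hp n).1 (hp n).2 ?_
  calc 1 / (2 * K) * p n * (n : ℝ) ^ (r - 1) = p n * (n : ℝ) ^ (r - 1) / (2 * K) := by ring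
    _ ≤ p n * (K * N n) / (2 * K) := by gcongr; exact (hp n).1.le
    _ = N n * p n / 2 := by field_simp

theorem statement_11 {V : Type} [DecidableEq V] (r : ℕ) (H : Finset (Finset V))
    (hH : IsUniform H r) (hne : H.Nonempty) (hint : ∀ v : V, ∃ e ∈ H, v ∉ e) :
    ∃ c : ℝ, 0 < c ∧ ∀ p : ℕ → ℝ, (∀ n, 0 < p n ∧ p n ≤ 1) →
      Tendsto (fun n : ℕ => p n * (n : ℝ) ^ (r - 1)) atTop atTop →
      Tendsto (fun n : ℕ => prob n r (p n)
        {G | c * p n * (n : ℝ) ^ (r - 1) ≤ (exNum G H : ℝ)})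
        atTop (nhds 1) :=
  statement_11_general r H hne hint

end Paper
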